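/- With X' separable, {x'_h} a countable dense subset of the unit ball of X', and weights (η_k), (ω_h) positive summing to 1, the bilinear functional ⟨f,g⟩ = ∑_h ω_h ∑_k η_k (∫_T χ_{B_k} f d|x'_h μ|)(∫_T χ_{B_k} g d|x'_h μ|) is an inner product on L¹[μ] (positive definite, symmetric, bilinear), and ‖f‖_{KS²[wτμ]} = ⟨f,f⟩^{1/2}. -/

import Mathlib

open MeasureTheory ENNReal

variable {T X : Type*} [MeasurableSpace T] [NormedAddCommGroup X] [NormedSpace ℝ X]

/-- The scalar signed measure `x' ∘ μ` associated with a vector measure `μ`. -/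
noncomputable def scalarMeas (μ : VectorMeasure T X) (x' : X →L[ℝ] ℝ) : SignedMeasure T :=
  μ.mapRange x'.toLinearMap.toAddMonoidHom x'.continuous

/-- The variation measure `|x'μ|`. -/
noncomputable def scalarVar (μ : VectorMeasure T X) (x' : X →L[ℝ] ℝ) : Measure T :=
  (scalarMeas μ x').totalVariation

/-- The integral of a real function with respect to a signed measure. -/
noncomputable def signedIntegral (s : SignedMeasure T) (f : T → ℝ) : ℝ :=
  ∫ t, f t ∂s.toJordanDecomposition.posPart - ∫ t, f t ∂s.toJordanDecomposition.negPart

/-- Kluvánek–Lewis `μ`-integrability. -/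
def KLIntegrable (μ : VectorMeasure T X) (f : T → ℝ) : Prop :=
  (∀ x' : X →L[ℝ] ℝ, Integrable f (scalarVar μ x')) ∧
  ∀ A : Set T, MeasurableSet A → ∃ xA : X, ∀ x' : X →L[ℝ] ℝ,
    x' xA = signedIntegral (scalarMeas μ x') (A.indicator f)

/-- The semivariation `‖μ‖(A) = sup_{‖x'‖ ≤ 1} |x'μ|(A)`. -/
noncomputable def semivar (μ : VectorMeasure T X) (A : Set T) : ℝ≥0∞ :=
  ⨆ x' : {y : X →L[ℝ] ℝ // ‖y‖ ≤ 1}, scalarVar μ x'.1 A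

/-- `(B k)` is a `μ`-dense family witnessing the separability of `μ`. -/
def MuDense (μ : VectorMeasure T X) (B : ℕ → Set T) : Prop :=
  (∀ k, MeasurableSet (B k)) ∧
  ∀ A : Set T, MeasurableSet A → ∀ ε : ℝ, 0 < ε →
    ∃ k, semivar μ (symmDiff A (B k)) ≤ ENNReal.ofReal ε

/-- The Kuelbs–Steadman norm `‖f‖_{KS^p[μ]}` (`1 ≤ p < ∞`). -/
noncomputable def ksNorm (μ : VectorMeasure T X) (B : ℕ → Set T) (η : ℕ → ℝ) (p : ℝ)
    (f : T → ℝ) : ℝ≥0∞ :=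
  ⨆ x' : {y : X →L[ℝ] ℝ // ‖y‖ ≤ 1},
    (∑' k, ENNReal.ofReal (η k * |∫ t, (B k).indicator f t ∂scalarVar μ x'.1| ^ p)) ^ (1 / p)

/-- The Kuelbs–Steadman norm `‖f‖_{KS^∞[μ]}`. -/
noncomputable def ksInfNorm (μ : VectorMeasure T X) (B : ℕ → Set T) (f : T → ℝ) : ℝ≥0∞ :=
  ⨆ x' : {y : X →L[ℝ] ℝ // ‖y‖ ≤ 1},
    ⨆ k : ℕ, ENNReal.ofReal |∫ t, (B k).indicator f t ∂scalarVar μ x'.1|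

/-- The scalar quantities `∫_T χ_{B_k} f d|x'μ|` entering the Kuelbs–Steadman norms. -/
noncomputable def ksIntegral (μ : VectorMeasure T X) (B : ℕ → Set T) (f : T → ℝ)
    (x' : X →L[ℝ] ℝ) (k : ℕ) : ℝ :=
  ∫ t, (B k).indicator f t ∂scalarVar μ x'

/-- The bilinear functional `⟨f,g⟩ = ∑_h ω_h ∑_k η_k (∫ χ_{B_k} f d|x'_h μ|)(∫ χ_{B_k} g d|x'_h μ|)`. -/
noncomputable def ksBilin (μ : VectorMeasure T X) (B : ℕ → Set T) (η ω : ℕ → ℝ)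
    (x'h : ℕ → X →L[ℝ] ℝ) (f g : T → ℝ) : ℝ :=
  ∑' h, ω h * ∑' k, η k * (ksIntegral μ B f (x'h h) k * ksIntegral μ B g (x'h h) k)

/-!
Symmetry, bilinearity and the norm identity are termwise computations. For definiteness, suppose
`⟨f, f⟩ = 0`, so that every `∫_{B_k} f d|x'_h μ|` vanishes. By Banach–Steinhaus, Kluvánek–Lewis
integrability gives `∫ |f| d|x'μ| ≤ C ‖x'‖`; since `|x'μ| ≤ |y'μ| + |(x' - y')μ|`, the integrals
`∫_{B_k} f d|x'μ|` are then Lipschitz in `x'`, and vanishing on the dense family `(x'_h)` they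
vanish on the whole unit ball. As `(B_k)` is `μ`-dense, `∫_A f d|x'μ| = 0` for every measurable
`A`, hence `f = 0` `|x'μ|`-a.e., and a norming functional `x'` shows `μ A = 0` for every
`A ⊆ {f ≠ 0}`.
-/

lemma summable_of_tsum_ne_zero {ι : Type*} {w : ι → ℝ} (h : ∑' i, w i ≠ 0) : Summable w :=
  by_contra fun hw => h (tsum_eq_zero_of_not_summable hw)

section WeightedSums

variable {ι : Type*} {w a : ι → ℝ} {M : ℝ}

lemma summable_mul_of_le (hw : ∀ i, 0 ≤ w i) (hws : Summable w) (ha : ∀ i, 0 ≤ a i)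
    (haM : ∀ i, a i ≤ M) : Summable fun i => w i * a i :=
  .of_nonneg_of_le (fun i => mul_nonneg (hw i) (ha i))
    (fun i => mul_le_mul_of_nonneg_left (haM i) (hw i)) (hws.mul_right M)

lemma tsum_mul_le_of_le (hw : ∀ i, 0 ≤ w i) (hws : Summable w) (ha : ∀ i, 0 ≤ a i)
    (haM : ∀ i, a i ≤ M) : ∑' i, w i * a i ≤ (∑' i, w i) * M := by
  rw [← tsum_mul_right]
  exact (summable_mul_of_le hw hws ha haM).tsum_le_tsum
    (fun i => mul_le_mul_of_nonneg_left (haM i) (hw i)) (hws.mul_right M)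

lemma eq_zero_of_tsum_mul_eq_zero (hw : ∀ i, 0 < w i) (hws : Summable w) (ha : ∀ i, 0 ≤ a i)
    (haM : ∀ i, a i ≤ M) (h0 : ∑' i, w i * a i = 0) (i : ι) : a i = 0 := by
  have hsum := summable_mul_of_le (fun i => (hw i).le) hws ha haM
  have hzero :=
    (hasSum_zero_iff_of_nonneg fun i => mul_nonneg (hw i).le (ha i)).1 (h0 ▸ hsum.hasSum)
  exact (mul_eq_zero.1 (congrFun hzero i)).resolve_left (hw i).ne'

end WeightedSums

lemma eq_zero_of_tsum_mul_tsum_mul_self_eq_zero {ι κ : Type*} {ω : ι → ℝ} {η : κ → ℝ}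
    (hω : ∀ h, 0 < ω h) (hωs : Summable ω) (hη : ∀ k, 0 < η k) (hηs : Summable η)
    {a : ι → κ → ℝ} {C : ℝ} (ha : ∀ h k, |a h k| ≤ C)
    (h0 : ∑' h, ω h * ∑' k, η k * (a h k * a h k) = 0) (h : ι) (k : κ) : a h k = 0 := by
  have hsq : ∀ h k, a h k * a h k ≤ C * C := fun h k => by
    rw [← abs_mul_abs_self]
    exact mul_self_le_mul_self (abs_nonneg _) (ha h k)
  have hrow := eq_zero_of_tsum_mul_eq_zero hω hωs
    (fun h => tsum_nonneg fun k => mul_nonneg (hη k).le (mul_self_nonneg _))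
    (fun h => tsum_mul_le_of_le (fun k => (hη k).le) hηs (fun k => mul_self_nonneg _) (hsq h))
    h0 h
  exact mul_self_eq_zero.1
    (eq_zero_of_tsum_mul_eq_zero hη hηs (fun k => mul_self_nonneg _) (hsq h) hrow k)

section Integrals

variable {m m₁ m₂ Δ : Measure T}

lemma integral_le_integral_add_of_le_add (h : m₁ ≤ m₂ + Δ) {φ : T → ℝ} (hφ : 0 ≤ φ)
    (hφ₂ : Integrable φ m₂) (hφΔ : Integrable φ Δ) :
    ∫ t, φ t ∂m₁ ≤ ∫ t, φ t ∂m₂ + ∫ t, φ t ∂Δ := by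
  rw [← integral_add_measure hφ₂ hφΔ]
  exact integral_mono_measure h (ae_of_all _ hφ) (hφ₂.add_measure hφΔ)

lemma abs_integral_sub_integral_le (h₁ : m₁ ≤ m₂ + Δ) (h₂ : m₂ ≤ m₁ + Δ) {g : T → ℝ}
    (hg₁ : Integrable g m₁) (hg₂ : Integrable g m₂) (hgΔ : Integrable g Δ) :
    |∫ t, g t ∂m₁ - ∫ t, g t ∂m₂| ≤ ∫ t, |g t| ∂Δ := by
  have hsplit : ∀ {m : Measure T}, Integrable g m →
      ∫ t, g t ∂m = ∫ t, max (g t) 0 ∂m - ∫ t, max (-g t) 0 ∂m := fun hm => by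
    rw [← integral_sub hm.pos_part hm.neg_part]
    simp only [max_zero_sub_max_neg_zero_eq_self]
  have habs : ∫ t, |g t| ∂Δ = ∫ t, max (g t) 0 ∂Δ + ∫ t, max (-g t) 0 ∂Δ := by
    rw [← integral_add hgΔ.pos_part hgΔ.neg_part]
    simp only [max_zero_add_max_neg_zero_eq_abs_self]
  have hpos₁ := integral_le_integral_add_of_le_add h₁ (fun t => le_max_right (g t) 0)
    hg₂.pos_part hgΔ.pos_part
  have hpos₂ := integral_le_integral_add_of_le_add h₂ (fun t => le_max_right (g t) 0)
    hg₁.pos_part hgΔ.pos_part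
  have hneg₁ := integral_le_integral_add_of_le_add h₁ (fun t => le_max_right (-g t) 0)
    hg₂.neg_part hgΔ.neg_part
  have hneg₂ := integral_le_integral_add_of_le_add h₂ (fun t => le_max_right (-g t) 0)
    hg₁.neg_part hgΔ.neg_part
  rw [hsplit hg₁, hsplit hg₂, habs, abs_le]
  constructor <;> linarith

lemma abs_setIntegral_sub_setIntegral_le {f : T → ℝ} (hf : Integrable f m) {A A' : Set T}
    (hA : MeasurableSet A) (hA' : MeasurableSet A') :
    |∫ t in A, f t ∂m - ∫ t in A', f t ∂m| ≤ ∫ t in symmDiff A A', |f t| ∂m := by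
  rw [← integral_indicator (f := f) hA, ← integral_indicator (f := f) hA',
    ← integral_indicator (f := fun t => |f t|) (hA.symmDiff hA'),
    ← integral_sub (hf.indicator hA) (hf.indicator hA')]
  refine norm_integral_le_of_norm_le (G := ℝ) (hf.abs.indicator (hA.symmDiff hA'))
    (ae_of_all _ fun t => ?_)
  rw [Real.norm_eq_abs, ← Set.abs_indicator_symmDiff]
  exact (norm_indicator_eq_indicator_norm f t).le

end Integrals

section SignedIntegral

lemma abs_signedIntegral_le (s : SignedMeasure T) {f g : T → ℝ}
    (hg : Integrable g s.totalVariation) (hfg : ∀ t, |f t| ≤ |g t|) :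
    |signedIntegral s f| ≤ ∫ t, |g t| ∂s.totalVariation := by
  obtain ⟨hgP, hgN⟩ := integrable_add_measure.1 hg
  have hbound : ∀ {m : Measure T}, Integrable g m → |∫ t, f t ∂m| ≤ ∫ t, |g t| ∂m :=
    fun hm => norm_integral_le_of_norm_le (G := ℝ) hm.abs (ae_of_all _ hfg)
  rw [SignedMeasure.totalVariation, integral_add_measure hgP.abs hgN.abs]
  exact (abs_sub _ _).trans (add_le_add (hbound hgP) (hbound hgN))

lemma integral_abs_le_of_mutuallySingular {P N : Measure T} (hPN : P ⟂ₘ N) {f : T → ℝ}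
    (hf : Measurable f) (hfi : Integrable f (P + N)) {c : ℝ}
    (hc : ∀ E, MeasurableSet E →
      |∫ t, E.indicator f t ∂P - ∫ t, E.indicator f t ∂N| ≤ c) :
    ∫ t, |f t| ∂(P + N) ≤ 4 * c := by
  -- `S` and the sign of `f` cut `T` into four pieces; on each, `∫ |f| d(P + N)` is `±` the
  -- signed integral.
  obtain ⟨S, hS, hPS, hNS⟩ := hPN
  have hPE : ∀ E, MeasurableSet E → ∫ t in E, f t ∂P
      = ∫ t, (Sᶜ ∩ E).indicator f t ∂P - ∫ t, (Sᶜ ∩ E).indicator f t ∂N := fun E hE => by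
    rw [← Set.indicator_indicator, integral_indicator hS.compl, integral_indicator hS.compl,
      setIntegral_measure_zero _ hNS, sub_zero,
        Measure.restrict_eq_self_of_ae_mem (s := Sᶜ) (compl_mem_ae_iff.2 hPS),
      integral_indicator hE]
  have hNE : ∀ E, MeasurableSet E → ∫ t in E, f t ∂N
      = -(∫ t, (S ∩ E).indicator f t ∂P - ∫ t, (S ∩ E).indicator f t ∂N) := fun E hE => by
    rw [← Set.indicator_indicator, integral_indicator hS, integral_indicator hS,
      setIntegral_measure_zero _ hPS, zero_sub, neg_neg,
      Measure.restrict_eq_self_of_ae_mem (mem_ae_iff.2 hNS), integral_indicator hE]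
  obtain ⟨hfP, hfN⟩ := integrable_add_measure.1 hfi
  have hpos : MeasurableSet {t | 0 ≤ f t} := measurableSet_le measurable_const hf
  have hneg : MeasurableSet {t | f t ≤ 0} := measurableSet_le hf measurable_const
  have eP := integral_norm_eq_pos_sub_neg hfP
  have eN := integral_norm_eq_pos_sub_neg hfN
  simp only [Real.norm_eq_abs] at eP eN
  rw [integral_add_measure hfP.abs hfN.abs, eP, eN, hPE _ hpos, hPE _ hneg, hNE _ hpos, hNE _ hneg]
  have h₁ := abs_le.1 (hc _ (hS.compl.inter hpos))
  have h₂ := abs_le.1 (hc _ (hS.compl.inter hneg))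
  have h₃ := abs_le.1 (hc _ (hS.inter hpos))
  have h₄ := abs_le.1 (hc _ (hS.inter hneg))
  linarith [h₁.2, h₂.1, h₃.1, h₄.2]

end SignedIntegral

lemma abs_indicator_le_abs_self {α : Type*} (s : Set α) (f : α → ℝ) (t : α) :
    |s.indicator f t| ≤ |f t| :=
  norm_indicator_le_norm_self f t

section ScalarMeasures

variable (μ : VectorMeasure T X)

@[simp]
lemma scalarMeas_apply (x' : X →L[ℝ] ℝ) (A : Set T) : scalarMeas μ x' A = x' (μ A) := rfl

lemma scalarMeas_add (a b : X →L[ℝ] ℝ) :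
    scalarMeas μ (a + b) = scalarMeas μ a + scalarMeas μ b :=
  VectorMeasure.ext fun _ _ => by simp

lemma scalarMeas_neg (a : X →L[ℝ] ℝ) : scalarMeas μ (-a) = -scalarMeas μ a :=
  VectorMeasure.ext fun _ _ => by simp

lemma scalarVar_add_le (a b : X →L[ℝ] ℝ) :
    scalarVar μ (a + b) ≤ scalarVar μ a + scalarVar μ b := by
  simp only [scalarVar, scalarMeas_add, SignedMeasure.totalVariation_eq_variation]
  exact VectorMeasure.variation_add_le

lemma scalarVar_neg (a : X →L[ℝ] ℝ) : scalarVar μ (-a) = scalarVar μ a := by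
  rw [scalarVar, scalarMeas_neg, SignedMeasure.totalVariation_neg, scalarVar]

lemma scalarVar_le_add_scalarVar_sub (a b : X →L[ℝ] ℝ) :
    scalarVar μ a ≤ scalarVar μ b + scalarVar μ (a - b) := by
  simpa only [add_sub_cancel] using scalarVar_add_le μ b (a - b)

lemma scalarVar_le_add_scalarVar_sub' (a b : X →L[ℝ] ℝ) :
    scalarVar μ b ≤ scalarVar μ a + scalarVar μ (a - b) := by
  rw [← scalarVar_neg μ (a - b), neg_sub]
  exact scalarVar_le_add_scalarVar_sub μ b a

lemma scalarVar_le_semivar {x' : X →L[ℝ] ℝ} (hx' : ‖x'‖ ≤ 1) (A : Set T) :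
    scalarVar μ x' A ≤ semivar μ A :=
  le_iSup (fun y : {y : X →L[ℝ] ℝ // ‖y‖ ≤ 1} => scalarVar μ y.1 A) ⟨x', hx'⟩

variable {μ}

lemma KLIntegrable.exists_integral_abs_le {f : T → ℝ} (hf : Measurable f)
    (hKL : KLIntegrable μ f) :
    ∃ C, 0 ≤ C ∧ ∀ x' : X →L[ℝ] ℝ, ∫ t, |f t| ∂scalarVar μ x' ≤ C * ‖x'‖ := by
  choose xA hxA using hKL.2
  let g : {A : Set T // MeasurableSet A} → (X →L[ℝ] ℝ) →L[ℝ] ℝ :=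
    fun A => ContinuousLinearMap.apply ℝ ℝ (xA A.1 A.2)
  have hg : ∀ A x', g A x' = signedIntegral (scalarMeas μ x') (A.1.indicator f) :=
    fun A x' => hxA A.1 A.2 x'
  obtain ⟨C, hC⟩ := banach_steinhaus (g := g) fun x' =>
    ⟨∫ t, |f t| ∂scalarVar μ x', fun A => by
      rw [hg, Real.norm_eq_abs]
      exact abs_signedIntegral_le _ (hKL.1 x') (abs_indicator_le_abs_self _ f)⟩
  have hC0 : 0 ≤ C := (norm_nonneg _).trans (hC ⟨∅, .empty⟩)
  refine ⟨4 * C, by positivity, fun x' => ?_⟩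
  rw [mul_assoc]
  refine integral_abs_le_of_mutuallySingular
    (scalarMeas μ x').toJordanDecomposition.mutuallySingular hf (hKL.1 x') fun E hE => ?_
  rw [← signedIntegral, ← hg ⟨E, hE⟩, ← Real.norm_eq_abs]
  exact ((g _).le_opNorm x').trans (mul_le_mul_of_nonneg_right (hC _) (norm_nonneg _))

end ScalarMeasures

section KuelbsSteadman

variable {μ : VectorMeasure T X} {B : ℕ → Set T} {f g : T → ℝ} {x' : X →L[ℝ] ℝ} {k : ℕ}

lemma abs_ksIntegral_le (hf : Integrable f (scalarVar μ x')) :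
    |ksIntegral μ B f x' k| ≤ ∫ t, |f t| ∂scalarVar μ x' :=
  norm_integral_le_of_norm_le (G := ℝ) hf.abs (ae_of_all _ (abs_indicator_le_abs_self _ f))

lemma ksIntegral_const_mul (c : ℝ) :
    ksIntegral μ B (fun t => c * f t) x' k = c * ksIntegral μ B f x' k := by
  simp only [ksIntegral, Set.indicator_mul_right, integral_const_mul]

lemma ksIntegral_add (hB : MeasurableSet (B k)) (hf : Integrable f (scalarVar μ x'))
    (hg : Integrable g (scalarVar μ x')) :
    ksIntegral μ B (fun t => f t + g t) x' k = ksIntegral μ B f x' k + ksIntegral μ B g x' k := by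
  simp only [ksIntegral, Set.indicator_add]
  exact integral_add (hf.indicator hB) (hg.indicator hB)

lemma abs_ksIntegral_sub_le (hB : MeasurableSet (B k))
    (hf : ∀ x' : X →L[ℝ] ℝ, Integrable f (scalarVar μ x')) (a b : X →L[ℝ] ℝ) :
    |ksIntegral μ B f a k - ksIntegral μ B f b k| ≤ ∫ t, |f t| ∂scalarVar μ (a - b) := by
  have hfB := fun x' => (hf x').indicator hB
  refine (abs_integral_sub_integral_le (scalarVar_le_add_scalarVar_sub μ a b)
    (scalarVar_le_add_scalarVar_sub' μ a b) (hfB a) (hfB b) (hfB (a - b))).trans ?_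
  exact integral_mono (hfB _).abs (hf _).abs (abs_indicator_le_abs_self _ f)

lemma continuous_ksIntegral (hB : MeasurableSet (B k))
    (hf : ∀ x' : X →L[ℝ] ℝ, Integrable f (scalarVar μ x')) {C : ℝ} (hC0 : 0 ≤ C)
    (hC : ∀ x' : X →L[ℝ] ℝ, ∫ t, |f t| ∂scalarVar μ x' ≤ C * ‖x'‖) :
    Continuous fun x' => ksIntegral μ B f x' k :=
  (LipschitzWith.of_dist_le_mul (K := C.toNNReal) fun a b => by
    rw [Real.dist_eq, dist_eq_norm, Real.coe_toNNReal _ hC0]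
    exact (abs_ksIntegral_sub_le hB hf a b).trans (hC _)).continuous

open Filter Topology in
lemma ae_eq_zero_of_ksIntegral_eq_zero (hB : MuDense μ B) (hx' : ‖x'‖ ≤ 1)
    (hf : Integrable f (scalarVar μ x')) (h0 : ∀ k, ksIntegral μ B f x' k = 0) :
    f =ᵐ[scalarVar μ x'] 0 := by
  refine hf.ae_eq_zero_of_forall_setIntegral_eq_zero fun A hA _ => ?_
  choose k hk using fun n : ℕ => hB.2 A hA (1 / (n + 1)) Nat.one_div_pos_of_nat
  have hsmall : Tendsto (fun n => scalarVar μ x' (symmDiff A (B (k n)))) atTop (𝓝 0) := by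
    refine tendsto_of_tendsto_of_tendsto_of_le_of_le tendsto_const_nhds ?_ (fun _ => bot_le)
      fun n => (scalarVar_le_semivar μ hx' _).trans (hk n)
    simpa using ENNReal.tendsto_ofReal (tendsto_one_div_add_atTop_nhds_zero_nat (𝕜 := ℝ))
  have hbound : ∀ n, |∫ t in A, f t ∂scalarVar μ x'|
      ≤ ∫ t in symmDiff A (B (k n)), |f t| ∂scalarVar μ x' := fun n => by
    have hBk := h0 (k n)
    rw [ksIntegral, integral_indicator (hB.1 _)] at hBk
    simpa [hBk] using abs_setIntegral_sub_setIntegral_le hf hA (hB.1 (k n))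
  exact abs_eq_zero.1 (le_antisymm
    (ge_of_tendsto' (hf.abs.tendsto_setIntegral_nhds_zero hsmall) hbound) (abs_nonneg _))

end KuelbsSteadman

section Bilinear

variable (μ : VectorMeasure T X) (B : ℕ → Set T) (η ω : ℕ → ℝ) (x'h : ℕ → X →L[ℝ] ℝ)

lemma ksBilin_comm (f g : T → ℝ) : ksBilin μ B η ω x'h f g = ksBilin μ B η ω x'h g f := by
  simp only [ksBilin, mul_comm (ksIntegral μ B f _ _)]

lemma ksBilin_self_nonneg (hη : ∀ k, 0 ≤ η k) (hω : ∀ h, 0 ≤ ω h) (f : T → ℝ) :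
    0 ≤ ksBilin μ B η ω x'h f f :=
  tsum_nonneg fun h =>
    mul_nonneg (hω h) (tsum_nonneg fun k => mul_nonneg (hη k) (mul_self_nonneg _))

lemma ksBilin_const_mul_left (c : ℝ) (f g : T → ℝ) :
    ksBilin μ B η ω x'h (fun t => c * f t) g = c * ksBilin μ B η ω x'h f g := by
  simp only [ksBilin, ksIntegral_const_mul, mul_assoc, mul_left_comm _ c, tsum_mul_left]

lemma ksBilin_self (f : T → ℝ) :
    ksBilin μ B η ω x'h f f = ∑' h, ω h * ∑' k, η k * |ksIntegral μ B f (x'h h) k| ^ (2 : ℝ) := by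
  simp only [ksBilin, Real.rpow_two, sq, abs_mul_abs_self]

lemma ksBilin_add_left (hB : ∀ k, MeasurableSet (B k)) {f g w : T → ℝ}
    (hf : ∀ x' : X →L[ℝ] ℝ, Integrable f (scalarVar μ x'))
    (hg : ∀ x' : X →L[ℝ] ℝ, Integrable g (scalarVar μ x'))
    (hfw : Summable fun h => ω h *
      ∑' k, η k * (ksIntegral μ B f (x'h h) k * ksIntegral μ B w (x'h h) k))
    (hgw : Summable fun h => ω h *
      ∑' k, η k * (ksIntegral μ B g (x'h h) k * ksIntegral μ B w (x'h h) k))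
    (hfw' : ∀ h, Summable fun k =>
      η k * (ksIntegral μ B f (x'h h) k * ksIntegral μ B w (x'h h) k))
    (hgw' : ∀ h, Summable fun k =>
      η k * (ksIntegral μ B g (x'h h) k * ksIntegral μ B w (x'h h) k)) :
    ksBilin μ B η ω x'h (fun t => f t + g t) w
      = ksBilin μ B η ω x'h f w + ksBilin μ B η ω x'h g w := by
  simp only [ksBilin, ksIntegral_add (hB _) (hf _) (hg _), add_mul, mul_add]
  rw [← hfw.tsum_add hgw]
  exact tsum_congr fun h => by rw [← mul_add, (hfw' h).tsum_add (hgw' h)]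

end Bilinear

section Definiteness

variable {μ : VectorMeasure T X} {B : ℕ → Set T}

theorem measure_eq_zero_of_ksBilin_self_eq_zero (hB : MuDense μ B) {η ω : ℕ → ℝ}
    (hη : ∀ k, 0 < η k) (hηs : Summable η) (hω : ∀ h, 0 < ω h) (hωs : Summable ω)
    {x'h : ℕ → X →L[ℝ] ℝ} (hx'h : ∀ h, ‖x'h h‖ ≤ 1)
    (hdense : ∀ y : X →L[ℝ] ℝ, ‖y‖ ≤ 1 → ∀ ε : ℝ, 0 < ε → ∃ h, ‖x'h h - y‖ ≤ ε)
    {f : T → ℝ} (hf : Measurable f) (hKL : KLIntegrable μ f) (h0 : ksBilin μ B η ω x'h f f = 0)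
    {A : Set T} (hA : A ⊆ {t | f t ≠ 0}) : μ A = 0 := by
  obtain ⟨C, hC0, hC⟩ := hKL.exists_integral_abs_le hf
  have hgrid : ∀ h k, ksIntegral μ B f (x'h h) k = 0 :=
    eq_zero_of_tsum_mul_tsum_mul_self_eq_zero hω hωs hη hηs (fun h k =>
      (abs_ksIntegral_le (hKL.1 _)).trans <| (hC _).trans <| mul_le_of_le_one_right hC0 (hx'h h)) h0
  have hball : ∀ y : X →L[ℝ] ℝ, ‖y‖ ≤ 1 → ∀ k, ksIntegral μ B f y k = 0 := fun y hy k => by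
    have hy : y ∈ closure (Set.range x'h) := Metric.mem_closure_iff.2 fun ε hε => by
      obtain ⟨h, hh⟩ := hdense y hy (ε / 2) (half_pos hε)
      exact ⟨x'h h, ⟨h, rfl⟩, by rw [dist_eq_norm, norm_sub_rev]; linarith⟩
    exact (isClosed_eq (continuous_ksIntegral (hB.1 k) hKL.1 hC0 hC) continuous_const
      ).closure_subset_iff.2 (Set.range_subset_iff.2 fun h => hgrid h k) hy
  obtain ⟨y, hy, hyA⟩ := exists_dual_vector'' ℝ (μ A)
  have hnull : scalarVar μ y A = 0 := measure_mono_null hA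
    (ae_iff.1 (ae_eq_zero_of_ksIntegral_eq_zero hB hy (hKL.1 y) (hball y hy)))
  have hμA := (scalarMeas μ y).null_of_totalVariation_zero hnull
  rw [scalarMeas_apply, hyA] at hμA
  simpa using hμA

end Definiteness

/-- `⟨·,·⟩` is an inner product on `L¹[μ]` (symmetric, bilinear, nonnegative,
and definite modulo `μ`-null functions), and `‖f‖_{KS²[wτμ]} = ⟨f,f⟩^{1/2}`. -/
theorem stmt_16 (μ : VectorMeasure T X) (B : ℕ → Set T) (hB : MuDense μ B)
    (η ω : ℕ → ℝ) (hη : ∀ k, 0 < η k) (hηsum : ∑' k, η k = 1)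
    (hω : ∀ h, 0 < ω h) (hωsum : ∑' h, ω h = 1)
    (x'h : ℕ → X →L[ℝ] ℝ) (hx'h : ∀ h, ‖x'h h‖ ≤ 1)
    (hdense : ∀ y : X →L[ℝ] ℝ, ‖y‖ ≤ 1 → ∀ ε : ℝ, 0 < ε → ∃ h, ‖x'h h - y‖ ≤ ε) :
    -- symmetry
    (∀ f g : T → ℝ, ksBilin μ B η ω x'h f g = ksBilin μ B η ω x'h g f) ∧
    -- nonnegativity on the diagonal
    (∀ f : T → ℝ, 0 ≤ ksBilin μ B η ω x'h f f) ∧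
    -- homogeneity in the first variable
    (∀ (c : ℝ) (f g : T → ℝ),
      ksBilin μ B η ω x'h (fun t => c * f t) g = c * ksBilin μ B η ω x'h f g) ∧
    -- additivity in the first variable (for summable integrable entries)
    (∀ f g w : T → ℝ, KLIntegrable μ f → KLIntegrable μ g →
      (Summable fun h => ω h *
        ∑' k, η k * (ksIntegral μ B f (x'h h) k * ksIntegral μ B w (x'h h) k)) →
      (Summable fun h => ω h *
        ∑' k, η k * (ksIntegral μ B g (x'h h) k * ksIntegral μ B w (x'h h) k)) →
      (∀ h, Summable fun k =>
        η k * (ksIntegral μ B f (x'h h) k * ksIntegral μ B w (x'h h) k)) →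
      (∀ h, Summable fun k =>
        η k * (ksIntegral μ B g (x'h h) k * ksIntegral μ B w (x'h h) k)) →
      ksBilin μ B η ω x'h (fun t => f t + g t) w
        = ksBilin μ B η ω x'h f w + ksBilin μ B η ω x'h g w) ∧
    -- definiteness modulo μ-null functions
    (∀ f : T → ℝ, Measurable f → KLIntegrable μ f → ksBilin μ B η ω x'h f f = 0 →
      ∀ A : Set T, MeasurableSet A → A ⊆ {t | f t ≠ 0} → μ A = 0) ∧
    -- the weak KS² norm is induced by the inner product
    (∀ f : T → ℝ,
      (∑' h, ω h * ∑' k, η k * |ksIntegral μ B f (x'h h) k| ^ (2 : ℝ)) ^ ((1 : ℝ) / 2)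
        = Real.sqrt (ksBilin μ B η ω x'h f f)) := by
  have hηs := summable_of_tsum_ne_zero (hηsum.symm ▸ one_ne_zero)
  have hωs := summable_of_tsum_ne_zero (hωsum.symm ▸ one_ne_zero)
  refine ⟨ksBilin_comm μ B η ω x'h,
    ksBilin_self_nonneg μ B η ω x'h (fun k => (hη k).le) (fun h => (hω h).le),
    ksBilin_const_mul_left μ B η ω x'h,
    fun f g w hf hg => ksBilin_add_left μ B η ω x'h hB.1 hf.1 hg.1,
    fun f hf hKL h0 A _ hA =>
      measure_eq_zero_of_ksBilin_self_eq_zero hB hη hηs hω hωs hx'h hdense hf hKL h0 hA,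
    fun f => by rw [ksBilin_self, Real.sqrt_eq_rpow]⟩
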